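/- Let Σ and T be finite alphabets, let h : Σ → T* be a map, and let h* : Σ* → T* be the induced monoid homomorphism (h* applied to a word is the concatenation of the images of its letters). If a language L ⊆ T* is recognized by a PRA-C with interval (p₁,p₂), then the language (h*)⁻¹(L) ⊆ Σ* is recognized by a PRA-C with the same interval (p₁,p₂). -/

import Mathlib

/-- A real square matrix is doubly stochastic if all entries are nonnegative and
every row and every column sums to 1. -/
def DoublyStochastic {n : ℕ} (A : Matrix (Fin n) (Fin n) ℝ) : Prop :=
  (∀ i j, 0 ≤ A i j) ∧ (∀ i, ∑ j, A i j = 1) ∧ (∀ j, ∑ i, A i j = 1)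

/-- A 1-way probabilistic reversible C-automaton (PRA-C) over input alphabet `α`:
a finite state set `Fin n`, an initial state, a set of accepting states, and
a doubly stochastic matrix for each symbol of the working alphabet
(the letters of `α` together with the end-markers `#` and `$`). -/
structure PRAC (α : Type) where
  n : ℕ
  q0 : Fin n
  F : Finset (Fin n)
  V : α → Matrix (Fin n) (Fin n) ℝ
  Vhash : Matrix (Fin n) (Fin n) ℝ
  Vdollar : Matrix (Fin n) (Fin n) ℝ
  ds : ∀ a, DoublyStochastic (V a)
  ds_hash : DoublyStochastic Vhash
  ds_dollar : DoublyStochastic Vdollar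

namespace PRAC

variable {α : Type}

/-- Acceptance probability of a word `w = σ₁…σ_k`: the total mass on accepting states of
`V_$ ⬝ V_{σ_k} ⬝ ⋯ ⬝ V_{σ₁} ⬝ V_# ⬝ e_{q₀}`. -/
def accProb (A : PRAC α) (w : List α) : ℝ :=
  ∑ q ∈ A.F,
    (A.Vdollar.mulVec
      (w.foldl (fun v a => (A.V a).mulVec v) (A.Vhash.mulVec (Pi.single A.q0 1)))) q

/-- Recognition of a language with interval `(p₁, p₂)`. -/
def Recognizes (A : PRAC α) (L : Set (List α)) (p1 p2 : ℝ) : Prop :=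
  0 ≤ p1 ∧ p1 < p2 ∧ p2 ≤ 1 ∧
  (∀ w ∈ L, p2 ≤ A.accProb w) ∧ (∀ w ∉ L, A.accProb w ≤ p1)

/-- Recognition with probability `p`, i.e. with interval `(1 - p, p)`. -/
def RecognizesWithProb (A : PRAC α) (L : Set (List α)) (p : ℝ) : Prop :=
  A.Recognizes L (1 - p) p

end PRAC

/-!
Feed each letter `a` of the new alphabet to the automaton as the block `h a`: the new
transition matrix of `a` is the product of the matrices of the letters of `h a`, which is again
doubly stochastic, and on every word `w` the new automaton runs exactly as the old one on
`w.flatMap h`, so both automata accept with the same probabilities.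
-/

theorem doublyStochastic_iff_mem {n : ℕ} (M : Matrix (Fin n) (Fin n) ℝ) :
    DoublyStochastic M ↔ M ∈ doublyStochastic ℝ (Fin n) :=
  mem_doublyStochastic_iff_sum.symm

namespace PRAC

open Matrix

variable {α β : Type}

/-- The matrix `V_{a_k} ⬝ ⋯ ⬝ V_{a_1}` of the word `a_1 … a_k`. -/
def wordMatrix (A : PRAC β) (l : List β) : Matrix (Fin A.n) (Fin A.n) ℝ :=
  (l.map A.V).reverse.prod

theorem wordMatrix_mem_doublyStochastic (A : PRAC β) (l : List β) :
    A.wordMatrix l ∈ doublyStochastic ℝ (Fin A.n) :=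
  Submonoid.list_prod_mem _ fun M hM => by
    obtain ⟨b, -, rfl⟩ := List.mem_map.mp (List.mem_reverse.mp hM)
    exact (doublyStochastic_iff_mem _).mp (A.ds b)

theorem foldl_mulVec_eq_wordMatrix_mulVec (A : PRAC β) (l : List β) (v : Fin A.n → ℝ) :
    l.foldl (fun v b => A.V b *ᵥ v) v = A.wordMatrix l *ᵥ v := by
  induction l generalizing v with
  | nil => simp [wordMatrix]
  | cons b l ih =>
    simp [ih, wordMatrix, List.prod_append, mulVec_mulVec]

/-- The automaton reading each letter `a` as the word `h a`. -/
def comap (A : PRAC β) (h : α → List β) : PRAC α where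
  n := A.n
  q0 := A.q0
  F := A.F
  V a := A.wordMatrix (h a)
  Vhash := A.Vhash
  Vdollar := A.Vdollar
  ds a := (doublyStochastic_iff_mem _).mpr (A.wordMatrix_mem_doublyStochastic (h a))
  ds_hash := A.ds_hash
  ds_dollar := A.ds_dollar

theorem accProb_comap (A : PRAC β) (h : α → List β) (w : List α) :
    (A.comap h).accProb w = A.accProb (w.flatMap h) := by
  have run_block : (fun v a => (h a).foldl (fun v b => A.V b *ᵥ v) v) =
      fun v a => A.wordMatrix (h a) *ᵥ v := by
    funext v a
    exact A.foldl_mulVec_eq_wordMatrix_mulVec (h a) v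
  rw [accProb, accProb, List.foldl_flatMap, run_block]
  rfl

theorem Recognizes.comap {A : PRAC β} {L : Set (List β)} {p1 p2 : ℝ}
    (hA : A.Recognizes L p1 p2) (h : α → List β) :
    (A.comap h).Recognizes {w | w.flatMap h ∈ L} p1 p2 := by
  obtain ⟨hp1, hp12, hp2, hin, hout⟩ := hA
  refine ⟨hp1, hp12, hp2, fun w hw => ?_, fun w hw => ?_⟩ <;> rw [accProb_comap]
  exacts [hin _ hw, hout _ hw]

end PRAC

theorem prac_closed_inverse_hom_general {α β : Type}
    (h : α → List β) (L : Set (List β)) (A : PRAC β) (p1 p2 : ℝ)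
    (hr : A.Recognizes L p1 p2) :
    ∃ B : PRAC α, B.Recognizes {w : List α | w.flatMap h ∈ L} p1 p2 :=
  ⟨A.comap h, hr.comap h⟩

/-- The class of languages recognized by PRA-C is closed under inverse homomorphisms:
if `L ⊆ T*` is recognized with interval `(p₁,p₂)` and `h : Σ → T*` induces the monoid
homomorphism `h* : Σ* → T*`, then `(h*)⁻¹(L)` is recognized with the same interval. -/
theorem prac_closed_inverse_hom {α β : Type} [Fintype α] [Fintype β]
    (h : α → List β) (L : Set (List β)) (A : PRAC β) (p1 p2 : ℝ)
    (hr : A.Recognizes L p1 p2) :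
    ∃ B : PRAC α, B.Recognizes {w : List α | w.flatMap h ∈ L} p1 p2 :=
  prac_closed_inverse_hom_general h L A p1 p2 hr
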